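/- Suppose k is an integral domain, 4 − δ² is invertible in k, and [n] ≠ 0 in k for all n ≥ 1 (so that the representation is a faithful representation of the infinite dihedral group). Then the subring of k[αs, αt] consisting of polynomials fixed by both σs and σt is exactly the k-subalgebra generated by the single element z := αs² + δ·αs·αt + αt². -/

import Mathlib

open MvPolynomial

/-- The quantum numbers `[n] ∈ k` attached to `δ ∈ k`:
`[0] = 0`, `[1] = 1`, `[n+1] = δ·[n] − [n−1]`. -/
def qn {k : Type*} [CommRing k] (δ : k) : ℕ → k
  | 0 => 0
  | 1 => 1
  | n + 2 => δ * qn δ (n + 1) - qn δ n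

/-- The involution `σs` of `R = k[αs, αt]` (with `αs = X 0`, `αt = X 1`) determined by
`σs(αs) = −αs`, `σs(αt) = αt + δ·αs`. -/
noncomputable def σs {k : Type*} [CommRing k] (δ : k) :
    MvPolynomial (Fin 2) k →ₐ[k] MvPolynomial (Fin 2) k :=
  aeval ![-(X 0), X 1 + C δ * X 0]

/-- The involution `σt` of `R = k[αs, αt]` determined by
`σt(αt) = −αt`, `σt(αs) = αs + δ·αt`. -/
noncomputable def σt {k : Type*} [CommRing k] (δ : k) :
    MvPolynomial (Fin 2) k →ₐ[k] MvPolynomial (Fin 2) k :=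
  aeval ![X 0 + C δ * X 1, -(X 1)]

/-!
Choose, in an algebraically closed field containing `k`, elements `μ, ν` with `μ + ν = δ` and
`μ ν = 1`. They are distinct because `(μ - ν)² = δ² - 4`, so `x = αs + μ αt`, `y = αs + ν αt`
are coordinates, and in them the rotation `σt σs` is the diagonal map `x ↦ μ² x`, `y ↦ ν² y`.
Since `μⁿ - νⁿ = (μ - ν) [n] ≠ 0`, `μ²` is not a root of unity, while `ν² = μ⁻²`; so the only
monomials fixed by the rotation are the powers of `x y = z`, and the invariants of the rotation
alone are already `K[z]`. To descend from `K[z]` to `k[z]`, put `αt = 0`: `z` becomes `αs²`,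
so if `f = p(z)` then `f(αs, 0) = p(αs²)`, and the coefficients of `p` are coefficients of `f`.
-/

open MvPolynomial

noncomputable def invariantQuadric {k : Type*} [CommRing k] (δ : k) : MvPolynomial (Fin 2) k :=
  X 0 ^ 2 + C δ * (X 0 * X 1) + X 1 ^ 2

section Invariance

variable {k : Type*} [CommRing k] (δ : k)

theorem σs_invariantQuadric : σs δ (invariantQuadric δ) = invariantQuadric δ := by
  simp only [σs, invariantQuadric, map_add, map_mul, map_pow, aeval_X, aeval_C, algebraMap_eq,
    Matrix.cons_val_zero, Matrix.cons_val_one]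
  ring

theorem σt_invariantQuadric : σt δ (invariantQuadric δ) = invariantQuadric δ := by
  simp only [σt, invariantQuadric, map_add, map_mul, map_pow, aeval_X, aeval_C, algebraMap_eq,
    Matrix.cons_val_zero, Matrix.cons_val_one]
  ring

end Invariance

section QuantumNumbers

variable {k K : Type*} [CommRing k] [CommRing K]

theorem map_qn (φ : k →+* K) (δ : k) : ∀ n, φ (qn δ n) = qn (φ δ) n
  | 0 => by simp [qn]
  | 1 => by simp [qn]
  | n + 2 => by rw [qn, qn, map_sub, map_mul, map_qn φ δ (n + 1), map_qn φ δ n]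

theorem pow_sub_pow_eq_sub_mul_qn {μ ν : K} (hmul : μ * ν = 1) :
    ∀ n, μ ^ n - ν ^ n = (μ - ν) * qn (μ + ν) n
  | 0 => by simp [qn]
  | 1 => by simp [qn]
  | n + 2 => by
    have h1 := pow_sub_pow_eq_sub_mul_qn hmul (n + 1)
    have h0 := pow_sub_pow_eq_sub_mul_qn hmul n
    rw [qn]
    linear_combination (μ + ν) * h1 - μ * ν * h0 - (μ - ν) * qn (μ + ν) n * hmul

theorem pow_ne_pow_of_qn_ne_zero [IsDomain K] {μ ν : K} (hmul : μ * ν = 1)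
    (h4 : 4 - (μ + ν) ^ 2 ≠ 0) {n : ℕ} (hn : qn (μ + ν) n ≠ 0) : μ ^ n ≠ ν ^ n := by
  have hne : μ - ν ≠ 0 := fun h => h4 (by linear_combination (-(μ - ν)) * h - 4 * hmul)
  rw [ne_eq, ← sub_eq_zero, pow_sub_pow_eq_sub_mul_qn hmul]
  exact mul_ne_zero hne hn

end QuantumNumbers

section DiagonalScaling

theorem aeval_C_mul_X_monomial {σ R : Type*} [CommSemiring R] (a : σ → R) (d : σ →₀ ℕ) (c : R) :
    aeval (fun i => C (a i) * X i) (monomial d c) =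
      monomial d (c * d.prod fun i n => a i ^ n) := by
  rw [aeval_monomial, monomial_eq, algebraMap_eq, map_mul, mul_assoc]
  simp only [mul_pow, Finsupp.prod_mul, ← map_pow, ← map_finsuppProd]

theorem coeff_aeval_C_mul_X {σ R : Type*} [CommSemiring R] (a : σ → R) (g : MvPolynomial σ R)
    (d : σ →₀ ℕ) :
    coeff d (aeval (fun i => C (a i) * X i) g) = coeff d g * d.prod fun i n => a i ^ n := by
  classical
  induction g using MvPolynomial.induction_on' with
  | monomial e c =>
    rw [aeval_C_mul_X_monomial, coeff_monomial, coeff_monomial]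
    split_ifs with h
    · rw [h]
    · rw [zero_mul]
  | add p q hp hq => rw [map_add, coeff_add, coeff_add, hp, hq, add_mul]

variable {K : Type*} [CommRing K] [IsDomain K]

theorem mem_adjoin_X_mul_X_of_aeval_C_mul_X_eq_self {a : Fin 2 → K}
    (ha : ∀ i j, a 0 ^ i * a 1 ^ j = 1 → i = j) {g : MvPolynomial (Fin 2) K}
    (hg : aeval (fun i => C (a i) * X i) g = g) :
    g ∈ Algebra.adjoin K {X 0 * X 1} := by
  rw [as_sum g]
  refine Subalgebra.sum_mem _ fun d hd => ?_
  have hfix : coeff d g * (a 0 ^ d 0 * a 1 ^ d 1) = coeff d g * 1 := by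
    rw [mul_one, ← Fin.prod_univ_two (fun i => a i ^ d i), ← Finsupp.prod_fintype _ _ (by simp),
      ← coeff_aeval_C_mul_X, hg]
  have hdiag : d 0 = d 1 := ha _ _ (mul_left_cancel₀ (mem_support_iff.mp hd) hfix)
  have hmono : monomial d (coeff d g) = C (coeff d g) * (X 0 * X 1) ^ d 1 := by
    rw [monomial_eq, Finsupp.prod_fintype _ _ (by simp), Fin.prod_univ_two, hdiag, mul_pow]
  rw [hmono, ← algebraMap_eq]
  exact mul_mem (Subalgebra.algebraMap_mem _ _)
    (pow_mem (Algebra.subset_adjoin (Set.mem_singleton _)) _)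

theorem eq_of_sq_pow_mul_sq_pow_eq_one {μ ν : K} (hmul : μ * ν = 1)
    (hpow : ∀ n, 1 ≤ n → μ ^ n ≠ ν ^ n) {i j : ℕ} (h : (μ ^ 2) ^ i * (ν ^ 2) ^ j = 1) :
    i = j := by
  wlog hij : i ≤ j generalizing μ ν i j
  · exact (this (by rwa [mul_comm]) (fun n hn => (hpow n hn).symm) (by rwa [mul_comm])
      (le_of_not_ge hij)).symm
  obtain ⟨m, rfl⟩ := Nat.exists_eq_add_of_le hij
  have hνν : ν ^ m * ν ^ m = 1 :=
    calc ν ^ m * ν ^ m = ((μ * ν) ^ 2) ^ i * (ν ^ 2) ^ m := by rw [hmul]; ring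
      _ = (μ ^ 2) ^ i * (ν ^ 2) ^ (i + m) := by ring
      _ = 1 := h
  have hνμ : ν ^ m * μ ^ m = 1 := by rw [← mul_pow, mul_comm, hmul, one_pow]
  by_contra hne
  exact hpow m (by omega)
    (mul_left_cancel₀ (pow_ne_zero m (right_ne_zero_of_mul_eq_one hmul)) (hνμ.trans hνν.symm))

end DiagonalScaling

section Diagonalization

variable {K : Type*} [Field K] {μ ν : K}

theorem C_inv_sub_mul_sub (hne : μ ≠ ν) :
    C (μ - ν)⁻¹ * (C μ - C ν) = (1 : MvPolynomial (Fin 2) K) := by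
  rw [← map_sub, ← map_mul, inv_mul_cancel₀ (sub_ne_zero.mpr hne), map_one]

noncomputable def diagonalizingEquiv (hne : μ ≠ ν) :
    MvPolynomial (Fin 2) K ≃ₐ[K] MvPolynomial (Fin 2) K :=
  AlgEquiv.ofAlgHom (aeval ![X 0 + C μ * X 1, X 0 + C ν * X 1])
    (aeval ![C (μ - ν)⁻¹ * (C μ * X 1 - C ν * X 0), C (μ - ν)⁻¹ * (X 0 - X 1)])
    (by
      ext1 i
      fin_cases i <;>
        simp only [AlgHom.comp_apply, AlgHom.id_apply, aeval_X, aeval_C, algebraMap_eq,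
          map_sub, map_mul, Matrix.cons_val_zero, Matrix.cons_val_one, Matrix.cons_val_fin_one,
          Fin.zero_eta, Fin.mk_one, Fin.isValue]
      · linear_combination X 0 * C_inv_sub_mul_sub hne
      · linear_combination X 1 * C_inv_sub_mul_sub hne)
    (by
      ext1 i
      fin_cases i <;>
        simp only [AlgHom.comp_apply, AlgHom.id_apply, aeval_X, aeval_C, algebraMap_eq, map_add,
          map_mul, Matrix.cons_val_zero, Matrix.cons_val_one, Matrix.cons_val_fin_one,
          Fin.zero_eta, Fin.mk_one, Fin.isValue]
      · linear_combination X 0 * C_inv_sub_mul_sub hne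
      · linear_combination X 1 * C_inv_sub_mul_sub hne)

theorem diagonalizingEquiv_apply (hne : μ ≠ ν) (g : MvPolynomial (Fin 2) K) :
    diagonalizingEquiv hne g = aeval ![X 0 + C μ * X 1, X 0 + C ν * X 1] g :=
  rfl

theorem σt_σs_diagonalizingEquiv (hmul : μ * ν = 1) (hne : μ ≠ ν) (g : MvPolynomial (Fin 2) K) :
    σt (μ + ν) (σs (μ + ν) (diagonalizingEquiv hne g)) =
      diagonalizingEquiv hne (aeval (fun i => C (![μ ^ 2, ν ^ 2] i) * X i) g) := by
  have hmulC : C μ * C ν = (1 : MvPolynomial (Fin 2) K) := by rw [← map_mul, hmul, map_one]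
  suffices ((σt (μ + ν)).comp (σs (μ + ν))).comp (diagonalizingEquiv hne).toAlgHom =
      (diagonalizingEquiv hne).toAlgHom.comp (aeval fun i => C (![μ ^ 2, ν ^ 2] i) * X i) from
    AlgHom.congr_fun this g
  ext1 i
  fin_cases i <;>
    simp only [σs, σt, AlgHom.comp_apply, AlgEquiv.coe_toAlgHom, diagonalizingEquiv_apply,
      aeval_X, aeval_C, algebraMap_eq, map_add, map_mul, map_neg, map_pow, Matrix.cons_val_zero,
      Matrix.cons_val_one, Matrix.cons_val_fin_one, Fin.zero_eta, Fin.mk_one, Fin.isValue]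
  · linear_combination (X 0 + (2 * C μ + C ν) * X 1) * hmulC
  · linear_combination (X 0 + (2 * C ν + C μ) * X 1) * hmulC

theorem diagonalizingEquiv_X_mul_X (hmul : μ * ν = 1) (hne : μ ≠ ν) :
    diagonalizingEquiv hne (X 0 * X 1) = invariantQuadric (μ + ν) := by
  have hmulC : C μ * C ν = (1 : MvPolynomial (Fin 2) K) := by rw [← map_mul, hmul, map_one]
  simp only [diagonalizingEquiv_apply, invariantQuadric, map_mul, map_add, aeval_X,
    Matrix.cons_val_zero, Matrix.cons_val_one, Matrix.cons_val_fin_one, Fin.isValue]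
  linear_combination X 1 ^ 2 * hmulC

theorem mem_adjoin_invariantQuadric_of_σt_σs_eq_self (hmul : μ * ν = 1)
    (hpow : ∀ n, 1 ≤ n → μ ^ n ≠ ν ^ n) {F : MvPolynomial (Fin 2) K}
    (hF : σt (μ + ν) (σs (μ + ν) F) = F) :
    F ∈ Algebra.adjoin K {invariantQuadric (μ + ν)} := by
  have hne : μ ≠ ν := by simpa using hpow 1 le_rfl
  set Ψ := diagonalizingEquiv hne
  have hfix : aeval (fun i => C (![μ ^ 2, ν ^ 2] i) * X i) (Ψ.symm F) = Ψ.symm F := by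
    apply Ψ.injective
    rw [← σt_σs_diagonalizingEquiv hmul, Ψ.apply_symm_apply, hF]
  have hmem : Ψ.symm F ∈ Algebra.adjoin K {X 0 * X 1} :=
    mem_adjoin_X_mul_X_of_aeval_C_mul_X_eq_self
      (fun i j h => eq_of_sq_pow_mul_sq_pow_eq_one hmul hpow (by simpa using h)) hfix
  have hmap : F ∈ (Algebra.adjoin K {X 0 * X 1}).map Ψ.toAlgHom :=
    Subalgebra.mem_map.mpr ⟨_, hmem, Ψ.apply_symm_apply F⟩
  rwa [AlgHom.map_adjoin_singleton, AlgEquiv.coe_toAlgHom, diagonalizingEquiv_X_mul_X hmul] at hmap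

end Diagonalization

theorem exists_mul_sub_eq_one {K : Type*} [Field K] [IsAlgClosed K] (δ : K) :
    ∃ μ, μ * (δ - μ) = 1 := by
  have hdeg : (Polynomial.X ^ 2 - Polynomial.C δ * Polynomial.X + 1).degree = 2 := by
    compute_degree!
  obtain ⟨μ, hμ⟩ := IsAlgClosed.exists_root _ (hdeg ▸ two_ne_zero)
  refine ⟨μ, ?_⟩
  simp only [Polynomial.IsRoot, Polynomial.eval_add, Polynomial.eval_sub, Polynomial.eval_mul,
    Polynomial.eval_pow, Polynomial.eval_X, Polynomial.eval_C, Polynomial.eval_one] at hμ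
  linear_combination -hμ

section BaseChange

variable {k K : Type*} [CommRing k] [CommRing K] (φ : k →+* K)

theorem map_σs (δ : k) (f : MvPolynomial (Fin 2) k) :
    map φ (σs δ f) = σs (φ δ) (map φ f) := by
  simp only [σs, aeval_eq_eval₂Hom, coe_eval₂Hom, algebraMap_eq, map_eval₂]
  congr 1
  funext i
  fin_cases i <;> simp

theorem map_σt (δ : k) (f : MvPolynomial (Fin 2) k) :
    map φ (σt δ f) = σt (φ δ) (map φ f) := by
  simp only [σt, aeval_eq_eval₂Hom, coe_eval₂Hom, algebraMap_eq, map_eval₂]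
  congr 1
  funext i
  fin_cases i <;> simp

theorem map_invariantQuadric (δ : k) : map φ (invariantQuadric δ) = invariantQuadric (φ δ) := by
  simp [invariantQuadric]

theorem map_polynomial_aeval (z : MvPolynomial (Fin 2) k) (q : Polynomial k) :
    map φ (Polynomial.aeval z q) = Polynomial.aeval (map φ z) (q.map φ) := by
  rw [Polynomial.aeval_def, Polynomial.aeval_def, Polynomial.hom_eval₂, Polynomial.eval₂_map,
    algebraMap_eq, algebraMap_eq, map_comp_C]

theorem map_aeval_X_zero (f : MvPolynomial (Fin 2) k) :
    (aeval ![(Polynomial.X : Polynomial k), 0] f).map φ = aeval ![Polynomial.X, 0] (map φ f) := by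
  induction f using MvPolynomial.induction_on with
  | C a => simp
  | add p q hp hq => simp [hp, hq]
  | mul_X p i hp => fin_cases i <;> simp [hp]

theorem aeval_X_zero_invariantQuadric (δ : k) :
    aeval ![(Polynomial.X : Polynomial k), 0] (invariantQuadric δ) = Polynomial.X ^ 2 := by
  simp [invariantQuadric]

theorem mem_adjoin_invariantQuadric_of_map {φ : k →+* K} (hφ : Function.Injective φ) {δ : k}
    {f : MvPolynomial (Fin 2) k} (h : map φ f ∈ Algebra.adjoin K {invariantQuadric (φ δ)}) :
    f ∈ Algebra.adjoin k {invariantQuadric δ} := by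
  rw [Algebra.adjoin_singleton_eq_range_aeval] at h ⊢
  obtain ⟨p, hp⟩ := h
  set q := Polynomial.contract 2 (aeval ![(Polynomial.X : Polynomial k), 0] f)
  have hexpand : Polynomial.expand K 2 p = (aeval ![(Polynomial.X : Polynomial k), 0] f).map φ := by
    rw [map_aeval_X_zero, ← hp, AlgHom.toRingHom_eq_coe, RingHom.coe_coe,
      ← Polynomial.aeval_algHom_apply, aeval_X_zero_invariantQuadric,
      Polynomial.expand_eq_comp_X_pow, Polynomial.comp_eq_aeval]
  have hpq : p = q.map φ := by
    ext n
    rw [Polynomial.coeff_map, Polynomial.coeff_contract two_ne_zero, ← Polynomial.coeff_map,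
      ← hexpand, Polynomial.coeff_expand_mul two_pos]
  refine ⟨q, map_injective φ hφ ?_⟩
  rw [AlgHom.toRingHom_eq_coe, RingHom.coe_coe, map_polynomial_aeval, map_invariantQuadric, ← hpq]
  exact hp

end BaseChange

/-- If `k` is an integral domain, `4 − δ²` is invertible and `[n] ≠ 0` for all `n ≥ 1`
(a faithful representation of the infinite dihedral group), then the subring of
`k[αs, αt]` of polynomials fixed by both `σs` and `σt` is exactly the `k`-subalgebra
generated by `z = αs² + δ·αs·αt + αt²`. -/
theorem dihedral_invariants_infinite {k : Type*} [CommRing k] [IsDomain k] (δ : k)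
    (hunit : IsUnit (4 - δ ^ 2)) (hqn : ∀ n : ℕ, 1 ≤ n → qn δ n ≠ 0) :
    ∀ f : MvPolynomial (Fin 2) k,
      (σs δ f = f ∧ σt δ f = f) ↔
        f ∈ Algebra.adjoin k
          ({X 0 ^ 2 + C δ * (X 0 * X 1) + X 1 ^ 2} : Set (MvPolynomial (Fin 2) k)) := by
  intro f
  change _ ↔ f ∈ Algebra.adjoin k {invariantQuadric δ}
  refine ⟨fun ⟨hs, ht⟩ => ?_, fun hf => ⟨?_, ?_⟩⟩
  · have hφ : Function.Injective (algebraMap k (AlgebraicClosure (FractionRing k))) := by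
      rw [IsScalarTower.algebraMap_eq k (FractionRing k)]
      exact (algebraMap (FractionRing k) _).injective.comp (IsFractionRing.injective k _)
    set φ := algebraMap k (AlgebraicClosure (FractionRing k))
    obtain ⟨μ, hμ⟩ := exists_mul_sub_eq_one (φ δ)
    have hδ : φ δ = μ + (φ δ - μ) := by ring
    have h4 : 4 - φ δ ^ 2 ≠ 0 := by simpa [map_ofNat] using (hunit.map φ).ne_zero
    refine mem_adjoin_invariantQuadric_of_map hφ ?_
    rw [hδ] at h4 ⊢
    refine mem_adjoin_invariantQuadric_of_σt_σs_eq_self hμ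
      (fun n hn => pow_ne_pow_of_qn_ne_zero hμ h4 ?_) ?_
    · rw [← hδ, ← map_qn]
      exact (map_ne_zero_iff φ hφ).mpr (hqn n hn)
    · rw [← hδ, ← map_σs, hs, ← map_σt, ht]
  · exact AlgHom.adjoin_le_equalizer (σs δ) (AlgHom.id k _)
      (Set.eqOn_singleton.mpr (σs_invariantQuadric δ)) hf
  · exact AlgHom.adjoin_le_equalizer (σt δ) (AlgHom.id k _)
      (Set.eqOn_singleton.mpr (σt_invariantQuadric δ)) hf
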